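/- arXiv:2504.02687 — 2 statements merged into one kernel-verified Lean document; each statement's English description precedes it below -/
import Mathlib

section
/- Let u : [0,a) → ℝ≥0 be continuous and suppose u(s) ≤ ∫₀^s C_G·(C_Σ·(1+u(σ)²)^{3/2} + C_F·(1+u(σ)²)) dσ for all s ∈ [0,a), where C_G > 0 and C_Σ, C_F ≥ 0 with C_Σ + C_F > 0. Define ψ(s) = (1/C_G)·∫₀^s dσ/(C_Σ(1+σ²)^{3/2} + C_F(1+σ²)), a strictly increasing function from [0,∞) onto [0,α) for some α > 0. Then u(s) ≤ ψ⁻¹(s) for all s ∈ [0, min(a,α)). -/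
open MeasureTheory Set

/-- The comparison function `ψ(s) = (1/C_G) ∫₀^s dσ/(C_Σ(1+σ²)^{3/2} + C_F(1+σ²))`. -/
noncomputable def bihariPsi (CG CS CF : ℝ) (s : ℝ) : ℝ :=
  (1 / CG) * ∫ σ in (0:ℝ)..s, 1 / (CS * (1 + σ ^ 2) ^ ((3:ℝ)/2) + CF * (1 + σ ^ 2))

/-- `α = ψ(∞)`, the (finite) total integral. -/
noncomputable def bihariAlpha (CG CS CF : ℝ) : ℝ :=
  (1 / CG) * ∫ σ in Set.Ioi (0:ℝ), 1 / (CS * (1 + σ ^ 2) ^ ((3:ℝ)/2) + CF * (1 + σ ^ 2))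

/-- Bihari–LaSalle type estimate: if a continuous nonnegative `u` on `[0,a)` satisfies
`u(s) ≤ ∫₀^s C_G(C_Σ(1+u²)^{3/2} + C_F(1+u²)) dσ`, then `u(s) ≤ ψ⁻¹(s)` on `[0, min(a,α))`,
i.e. `u(s) ≤ v` whenever `v ≥ 0` and `ψ(v) = s`. -/
theorem bihari_gradient_estimate (CG CS CF a : ℝ) (hCG : 0 < CG) (hCS : 0 ≤ CS) (hCF : 0 ≤ CF)
    (hCSF : 0 < CS + CF) (ha : 0 < a) (u : ℝ → ℝ)
    (hcont : ContinuousOn u (Set.Ico 0 a))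
    (hnonneg : ∀ s ∈ Set.Ico 0 a, 0 ≤ u s)
    (hineq : ∀ s ∈ Set.Ico 0 a,
      u s ≤ ∫ σ in (0:ℝ)..s,
        CG * (CS * (1 + (u σ) ^ 2) ^ ((3:ℝ)/2) + CF * (1 + (u σ) ^ 2))) :
    ∀ s ∈ Set.Ico 0 (min a (bihariAlpha CG CS CF)), ∀ v : ℝ, 0 ≤ v →
      bihariPsi CG CS CF v = s → u s ≤ v := by
  -- the base function h
  set h : ℝ → ℝ := fun σ => CS * (1 + σ ^ 2) ^ ((3:ℝ)/2) + CF * (1 + σ ^ 2) with hh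
  have hone : ∀ σ : ℝ, (0:ℝ) < 1 + σ ^ 2 := fun σ => by positivity
  have h1le : ∀ σ : ℝ, (1:ℝ) ≤ 1 + σ ^ 2 := fun σ => by nlinarith [sq_nonneg σ]
  have hpos : ∀ σ : ℝ, 0 < h σ := by
    intro σ
    have h1 : (1:ℝ) ≤ (1 + σ ^ 2) ^ ((3:ℝ)/2) :=
      Real.one_le_rpow (h1le σ) (by norm_num)
    have : CS + CF ≤ h σ := by
      have := mul_le_mul_of_nonneg_left h1 hCS
      have := mul_le_mul_of_nonneg_left (h1le σ) hCF
      simp only [hh]; nlinarith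
    linarith
  have hcont_h : Continuous h := by
    have : Continuous fun σ : ℝ => (1 + σ ^ 2) ^ ((3:ℝ)/2) := by
      apply Continuous.rpow_const (by continuity)
      intro σ; left; exact ne_of_gt (hone σ)
    fun_prop
  have hmono : MonotoneOn h (Set.Ici (0:ℝ)) := by
    intro x hx y hy hxy
    simp only [mem_Ici] at hx hy
    have hsq : 1 + x ^ 2 ≤ 1 + y ^ 2 := by nlinarith
    have h1 : (1 + x ^ 2) ^ ((3:ℝ)/2) ≤ (1 + y ^ 2) ^ ((3:ℝ)/2) :=
      Real.rpow_le_rpow (le_of_lt (hone x)) hsq (by norm_num)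
    simp only [hh]
    nlinarith [mul_le_mul_of_nonneg_left h1 hCS, mul_le_mul_of_nonneg_left hsq hCF]
  have hcont_k : Continuous fun σ : ℝ => 1 / h σ :=
    continuous_const.div hcont_h fun σ => ne_of_gt (hpos σ)
  -- ψ and its derivative
  have hpsi_deriv : ∀ x : ℝ, HasDerivAt (bihariPsi CG CS CF) ((1/CG) * (1 / h x)) x := by
    intro x
    have : HasDerivAt (fun y : ℝ => ∫ σ in (0:ℝ)..y, 1 / h σ) (1 / h x) x :=
      intervalIntegral.integral_hasDerivAt_right
        (hcont_k.intervalIntegrable 0 x)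
        (hcont_k.stronglyMeasurableAtFilter _ _)
        hcont_k.continuousAt
    exact this.const_mul (1/CG)
  have hpsi_mono : StrictMono (bihariPsi CG CS CF) := by
    apply strictMono_of_deriv_pos
    intro x
    rw [(hpsi_deriv x).deriv]
    have := hpos x
    positivity
  -- main part
  intro s hs v hv hpsiv
  have hs0 : 0 ≤ s := hs.1
  have hsa : s < a := lt_of_lt_of_le hs.2 (min_le_left _ _)
  have hsub : Set.Icc (0:ℝ) s ⊆ Set.Ico 0 a := fun t ht => ⟨ht.1, lt_of_le_of_lt ht.2 hsa⟩
  -- W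
  set g : ℝ → ℝ := fun σ => CG * (CS * (1 + (u σ) ^ 2) ^ ((3:ℝ)/2) + CF * (1 + (u σ) ^ 2)) with hg
  have hgu : ∀ σ, g σ = CG * h (u σ) := fun σ => rfl
  set W : ℝ → ℝ := fun t => ∫ σ in (0:ℝ)..t, g σ with hW
  have hcont_gu : ContinuousOn g (Set.Ico 0 a) := by
    have : ContinuousOn (fun σ => CG * h σ) univ := (continuous_const.mul hcont_h).continuousOn
    exact fun x hx => ((this (u x) (mem_univ _)).comp (hcont x hx) (fun y hy => mem_univ _))
  have hint : ∀ t ∈ Set.Icc (0:ℝ) s, IntervalIntegrable g volume 0 t := by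
    intro t ht
    apply ContinuousOn.intervalIntegrable
    apply hcont_gu.mono
    rw [uIcc_of_le ht.1]
    exact fun x hx => hsub ⟨hx.1, le_trans hx.2 ht.2⟩
  have hWcont : ContinuousOn W (Set.Icc 0 s) := by
    have := intervalIntegral.continuousOn_primitive_interval
      (μ := volume) (f := g) (a := (0:ℝ)) (b := s) ?_
    · rwa [uIcc_of_le hs0] at this
    · rw [uIcc_of_le hs0]
      exact (hcont_gu.mono hsub).integrableOn_compact isCompact_Icc
  have hWderiv : ∀ t ∈ Set.Ioo (0:ℝ) s, HasDerivAt W (g t) t := by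
    intro t ht
    have hta : t ∈ Set.Ioo 0 a := ⟨ht.1, lt_trans ht.2 hsa⟩
    refine intervalIntegral.integral_hasDerivAt_right (hint t ⟨le_of_lt ht.1, le_of_lt ht.2⟩)
      ?_ ?_
    · exact (hcont_gu.mono Ioo_subset_Ico_self).stronglyMeasurableAtFilter isOpen_Ioo t hta
    · exact (hcont_gu.mono Ioo_subset_Ico_self).continuousAt (isOpen_Ioo.mem_nhds hta)
  -- u t ≤ W t and 0 ≤ u t for t ∈ Icc 0 s
  have huW : ∀ t ∈ Set.Icc (0:ℝ) s, u t ≤ W t := fun t ht => hineq t (hsub ht)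
  have hu0 : ∀ t ∈ Set.Icc (0:ℝ) s, 0 ≤ u t := fun t ht => hnonneg t (hsub ht)
  -- F
  set F : ℝ → ℝ := fun t => bihariPsi CG CS CF (W t) - t with hF
  have hFderiv : ∀ t ∈ Set.Ioo (0:ℝ) s,
      HasDerivAt F ((1/CG) * (1 / h (W t)) * g t - 1) t := by
    intro t ht
    exact (((hpsi_deriv (W t)).comp t (hWderiv t ht)).sub (hasDerivAt_id t))
  have hFderiv_nonpos : ∀ t ∈ Set.Ioo (0:ℝ) s, deriv F t ≤ 0 := by
    intro t ht
    rw [(hFderiv t ht).deriv]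
    have ht' : t ∈ Set.Icc (0:ℝ) s := ⟨le_of_lt ht.1, le_of_lt ht.2⟩
    have h1 : h (u t) ≤ h (W t) :=
      hmono (hu0 t ht') (le_trans (hu0 t ht') (huW t ht')) (huW t ht')
    have hWt : 0 < h (W t) := hpos (W t)
    rw [hgu]
    have : (1/CG) * (1 / h (W t)) * (CG * h (u t)) = h (u t) / h (W t) := by
      field_simp
    rw [this]
    have : h (u t) / h (W t) ≤ 1 := (div_le_one hWt).mpr h1
    linarith
  have hpsic : Continuous (bihariPsi CG CS CF) := by
    have : Differentiable ℝ (bihariPsi CG CS CF) := fun x => (hpsi_deriv x).differentiableAt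
    exact this.continuous
  have hioo : interior (Set.Icc (0:ℝ) s) = Set.Ioo 0 s := interior_Icc
  have hFanti : AntitoneOn F (Set.Icc 0 s) := by
    apply antitoneOn_of_deriv_nonpos (convex_Icc 0 s)
    · exact ((hpsic.comp_continuousOn hWcont).sub continuousOn_id)
    · rw [hioo]
      exact fun t ht => ((hFderiv t ht).differentiableAt).differentiableWithinAt
    · rw [hioo]; exact hFderiv_nonpos
  have hFs : F s ≤ F 0 := hFanti (by constructor <;> simp [hs0]) (by constructor <;> simp [hs0]) hs0
  have hW0 : W 0 = 0 := intervalIntegral.integral_same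
  have hpsi0 : bihariPsi CG CS CF 0 = 0 := by
    simp [bihariPsi]
  have hF0 : F 0 = 0 := by simp [hF, hW0, hpsi0]
  have hkey : bihariPsi CG CS CF (W s) ≤ bihariPsi CG CS CF v := by
    have : F s = bihariPsi CG CS CF (W s) - s := rfl
    rw [hpsiv]
    linarith [hFs, hF0, this]
  have hWv : W s ≤ v := by
    by_contra hc
    push_neg at hc
    exact absurd hkey (not_le.mpr (hpsi_mono hc))
  exact le_trans (huW s ⟨hs0, le_refl s⟩) hWv
end

section
/- Let D₁ and D₂ be two strictly convex compact domains in ℝ² with smooth boundaries, touching at a common boundary point p with the same inward normal there. If for each direction of the inward-pointing normal ν ∈ S¹ the curvature of ∂D₁ at the boundary point with normal ν is at most the curvature of ∂D₂ at its boundary point with normal ν, then D₂ ⊆ D₁. -/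
/-!
Put `g = h₁ - h₂`. It is `2π`-periodic, the touching condition gives `g θ₀ = g' θ₀ = 0`, and the
curvature comparison gives `g + g'' ≥ 0`. A Sturm comparison with `sin` shows `g ≥ 0`: for
`s ∈ [θ₀, θ₀ + π]` the kernel `K t = g' t * sin (s - t) + g t * cos (s - t)` has derivative
`(g + g'') t * sin (s - t) ≥ 0` on `[θ₀, s]`, so `g s = K s ≥ K θ₀ = 0`. Reflection handles
`[θ₀ - π, θ₀]` and periodicity the rest of `ℝ`. Finally `h₂ ≤ h₁` means `D₂ ⊆ D₁`.
-/

open Real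

/-- The strictly convex compact planar domain with (smooth, `2π`-periodic) support function
`h : ℝ → ℝ`, the angle `θ` parametrising the unit (outward) normal `(cos θ, sin θ)`. -/
def supportDomain (h : ℝ → ℝ) : Set (ℝ × ℝ) :=
  {y : ℝ × ℝ | ∀ θ : ℝ, y.1 * Real.cos θ + y.2 * Real.sin θ ≤ h θ}

/-- The boundary point of `supportDomain h` with (outward) normal direction `θ`; the Gauss map
`∂D → S¹` is inverse to `θ ↦ boundaryPoint h θ`. -/
noncomputable def boundaryPoint (h : ℝ → ℝ) (θ : ℝ) : ℝ × ℝ :=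
  (h θ * Real.cos θ - deriv h θ * Real.sin θ,
   h θ * Real.sin θ + deriv h θ * Real.cos θ)

open Set

theorem supportDomain_mono {h₁ h₂ : ℝ → ℝ} (h : ∀ θ, h₂ θ ≤ h₁ θ) :
    supportDomain h₂ ⊆ supportDomain h₁ :=
  fun _ hy θ => (hy θ).trans (h θ)

theorem eq_and_deriv_eq_of_boundaryPoint_eq {h₁ h₂ : ℝ → ℝ} {θ : ℝ}
    (h : boundaryPoint h₁ θ = boundaryPoint h₂ θ) :
    h₁ θ = h₂ θ ∧ deriv h₁ θ = deriv h₂ θ := by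
  obtain ⟨hx, hy⟩ := Prod.ext_iff.mp h
  simp only [boundaryPoint] at hx hy
  have hsc := sin_sq_add_cos_sq θ
  constructor
  · linear_combination cos θ * hx + sin θ * hy - (h₁ θ - h₂ θ) * hsc
  · linear_combination -sin θ * hx + cos θ * hy - (deriv h₁ θ - deriv h₂ θ) * hsc

namespace Sturm

variable {g g' g'' : ℝ → ℝ} {θ₀ : ℝ}

theorem hasDerivAt_kernel (s t : ℝ) (hg : HasDerivAt g (g' t) t)
    (hg' : HasDerivAt g' (g'' t) t) :
    HasDerivAt (fun t => g' t * sin (s - t) + g t * cos (s - t))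
      ((g t + g'' t) * sin (s - t)) t := by
  have hsin := (hasDerivAt_sin (s - t)).comp t ((hasDerivAt_id t).const_sub s)
  have hcos := (hasDerivAt_cos (s - t)).comp t ((hasDerivAt_id t).const_sub s)
  exact ((hg'.mul hsin).add (hg.mul hcos)).congr_deriv (by simp only [Function.comp_def]; ring)

theorem nonneg_of_mem_Icc_self_add_pi {s : ℝ}
    (hg : ∀ t, HasDerivAt g (g' t) t) (hg' : ∀ t, HasDerivAt g' (g'' t) t)
    (h0 : g θ₀ = 0) (h0' : g' θ₀ = 0) (hpos : ∀ t, 0 ≤ g t + g'' t)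
    (hs : s ∈ Icc θ₀ (θ₀ + π)) : 0 ≤ g s := by
  have hK := fun t => hasDerivAt_kernel s t (hg t) (hg' t)
  have hmono : MonotoneOn (fun t => g' t * sin (s - t) + g t * cos (s - t)) (Icc θ₀ s) := by
    refine monotoneOn_of_hasDerivWithinAt_nonneg (convex_Icc _ _)
      (fun t _ => (hK t).continuousAt.continuousWithinAt) (fun t _ => (hK t).hasDerivWithinAt) ?_
    rw [interior_Icc]
    intro t ht
    exact mul_nonneg (hpos t) (sin_nonneg_of_nonneg_of_le_pi (by linarith [ht.2])
      (by linarith [ht.1, hs.2]))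
  simpa [h0, h0'] using hmono (left_mem_Icc.mpr hs.1) (right_mem_Icc.mpr hs.1) hs.1

theorem nonneg_of_mem_Icc_sub_pi_add_pi {s : ℝ}
    (hg : ∀ t, HasDerivAt g (g' t) t) (hg' : ∀ t, HasDerivAt g' (g'' t) t)
    (h0 : g θ₀ = 0) (h0' : g' θ₀ = 0) (hpos : ∀ t, 0 ≤ g t + g'' t)
    (hs : s ∈ Icc (θ₀ - π) (θ₀ + π)) : 0 ≤ g s := by
  rcases le_total θ₀ s with hθs | hsθ
  · exact nonneg_of_mem_Icc_self_add_pi hg hg' h0 h0' hpos ⟨hθs, hs.2⟩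
  · have hgr (t : ℝ) : HasDerivAt (fun t => g (-t)) (-g' (-t)) t := by
      simpa [Function.comp_def] using (hg (-t)).comp t (hasDerivAt_neg t)
    have hgr' (t : ℝ) : HasDerivAt (fun t => -g' (-t)) (g'' (-t)) t := by
      simpa [Function.comp_def, Pi.neg_def] using ((hg' (-t)).comp t (hasDerivAt_neg t)).neg
    simpa using nonneg_of_mem_Icc_self_add_pi (θ₀ := -θ₀) (s := -s) hgr hgr'
      (by simpa using h0) (by simpa using h0') (fun t => hpos (-t))
      ⟨by linarith, by linarith [hs.1]⟩

theorem nonneg_of_periodic (hper : Function.Periodic g (2 * π))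
    (hg : ∀ t, HasDerivAt g (g' t) t) (hg' : ∀ t, HasDerivAt g' (g'' t) t)
    (h0 : g θ₀ = 0) (h0' : g' θ₀ = 0) (hpos : ∀ t, 0 ≤ g t + g'' t) (θ : ℝ) : 0 ≤ g θ := by
  obtain ⟨s, hs, hθs⟩ := hper.exists_mem_Ico (by positivity) θ (θ₀ - π)
  rw [hθs]
  exact nonneg_of_mem_Icc_sub_pi_add_pi hg hg' h0 h0' hpos ⟨hs.1, by linarith [hs.2]⟩

end Sturm

theorem blaschke_inclusion_general
    (h₁ h₂ : ℝ → ℝ)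
    (hsm₁ : ContDiff ℝ 2 h₁) (hsm₂ : ContDiff ℝ 2 h₂)
    (hper₁ : Function.Periodic h₁ (2 * π)) (hper₂ : Function.Periodic h₂ (2 * π))
    -- curvature comparison κ₁(ν) ≤ κ₂(ν) for every normal direction ν ∈ S¹:
    (hcurv : ∀ θ, h₂ θ + deriv (deriv h₂) θ ≤ h₁ θ + deriv (deriv h₁) θ)
    -- D₁ and D₂ touch at p with coinciding inward normals:
    (p : ℝ × ℝ) (θ₀ : ℝ)
    (htouch₁ : boundaryPoint h₁ θ₀ = p) (htouch₂ : boundaryPoint h₂ θ₀ = p) :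
    supportDomain h₂ ⊆ supportDomain h₁ := by
  obtain ⟨hval, hder⟩ := eq_and_deriv_eq_of_boundaryPoint_eq (htouch₁.trans htouch₂.symm)
  have hd {h : ℝ → ℝ} (hh : ContDiff ℝ 2 h) (t : ℝ) : HasDerivAt h (deriv h t) t :=
    (hh.differentiable two_ne_zero t).hasDerivAt
  have hdd {h : ℝ → ℝ} (hh : ContDiff ℝ 2 h) (t : ℝ) :
      HasDerivAt (deriv h) (deriv (deriv h) t) t :=
    (hh.differentiable_deriv_two t).hasDerivAt
  refine supportDomain_mono fun θ => sub_nonneg.mp ?_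
  refine Sturm.nonneg_of_periodic (g := h₁ - h₂) (hper₁.sub hper₂)
    (fun t => (hd hsm₁ t).sub (hd hsm₂ t)) (fun t => (hdd hsm₁ t).sub (hdd hsm₂ t))
    (sub_eq_zero.mpr hval) (sub_eq_zero.mpr hder) (fun t => ?_) θ
  linarith [hcurv t, Pi.sub_apply h₁ h₂ t]

/-- **Blaschke's inclusion theorem.** Let `D₁, D₂ ⊆ ℝ²` be strictly convex compact domains with
smooth boundaries, given by smooth `2π`-periodic support functions `h₁, h₂` (strict convexity:
the radius of curvature `h + h'' > 0`). The curvature of `∂Dᵢ` at the boundary point with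
normal angle `θ` is `κᵢ(θ) = 1/(hᵢ(θ) + hᵢ''(θ))`; the comparison `κ₁ ≤ κ₂` (as functions of
the normal) reads `h₂ + h₂'' ≤ h₁ + h₁''`. If `D₁` and `D₂` touch at a common boundary point
`p` with the same normal there, then `D₂ ⊆ D₁`. -/
theorem blaschke_inclusion
    (h₁ h₂ : ℝ → ℝ)
    (hsm₁ : ContDiff ℝ 2 h₁) (hsm₂ : ContDiff ℝ 2 h₂)
    (hper₁ : Function.Periodic h₁ (2 * π)) (hper₂ : Function.Periodic h₂ (2 * π))
    (hconv₁ : ∀ θ, 0 < h₁ θ + deriv (deriv h₁) θ)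
    (hconv₂ : ∀ θ, 0 < h₂ θ + deriv (deriv h₂) θ)
    -- curvature comparison κ₁(ν) ≤ κ₂(ν) for every normal direction ν ∈ S¹:
    (hcurv : ∀ θ, h₂ θ + deriv (deriv h₂) θ ≤ h₁ θ + deriv (deriv h₁) θ)
    -- D₁ and D₂ touch at p with coinciding inward normals:
    (p : ℝ × ℝ) (θ₀ : ℝ)
    (htouch₁ : boundaryPoint h₁ θ₀ = p) (htouch₂ : boundaryPoint h₂ θ₀ = p) :
    supportDomain h₂ ⊆ supportDomain h₁ :=
  blaschke_inclusion_general h₁ h₂ hsm₁ hsm₂ hper₁ hper₂ hcurv p θ₀ htouch₁ htouch₂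
end
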